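/- Let A be the map of sections of TM ⊕ (M × g) given by A(X,u) = (X, φ(u) + ω(X)), where φ : M → End(g) is smooth and ω is a smooth g-valued 1-form on M. If A is a Lie algebra homomorphism for the bracket [(X,u),(Y,v)] = ([X,Y],[u,v]+X(v)-Y(u)), then for every x ∈ M, φ(x) is a Lie algebra homomorphism of g, i.e. φ(x)([a,b]) = [φ(x)a, φ(x)b] for all a,b ∈ g. -/

import Mathlib

/-- The trivial transitive Lie algebroid bracket on sections of `TM ⊕ (M × g)`
(here `M = E` a real normed space). -/
noncomputable def algebroidBracket {E g : Type*} [NormedAddCommGroup E] [NormedSpace ℝ E]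
    [NormedAddCommGroup g] [NormedSpace ℝ g] [LieRing g] [LieAlgebra ℝ g]
    (s t : (E → E) × (E → g)) : (E → E) × (E → g) :=
  (VectorField.lieBracket ℝ s.1 t.1,
    fun x => ⁅s.2 x, t.2 x⁆ + fderiv ℝ t.2 x (s.1 x) - fderiv ℝ s.2 x (t.1 x))

/-- A smooth section: a pair of a smooth vector field and a smooth `g`-valued map. -/
def SmoothPairSection {E g : Type*} [NormedAddCommGroup E] [NormedSpace ℝ E]
    [NormedAddCommGroup g] [NormedSpace ℝ g]
    (s : (E → E) × (E → g)) : Prop :=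
  ContDiff ℝ (⊤ : ℕ∞) s.1 ∧ ContDiff ℝ (⊤ : ℕ∞) s.2

/-- The fiberwise map `A(X,u) = (X, φ(u) + ω(X))`. -/
def algebroidMap {E g : Type*} [NormedAddCommGroup E] [NormedSpace ℝ E]
    [NormedAddCommGroup g] [NormedSpace ℝ g]
    (φ : E → (g →L[ℝ] g)) (ω : E → (E →L[ℝ] g))
    (s : (E → E) × (E → g)) : (E → E) × (E → g) :=
  (s.1, fun x => φ x (s.2 x) + ω x (s.1 x))

attribute [local instance high] NormedAddCommGroup.toAddCommGroup NormedSpace.toModule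

/-- if `A(X,u) = (X, φ(u) + ω(X))` is a Lie algebra homomorphism of
sections, then each `φ x` is a Lie algebra homomorphism of `g`. -/
theorem fiberwise_lie_hom {E g : Type*} [NormedAddCommGroup E] [NormedSpace ℝ E]
    [NormedAddCommGroup g] [NormedSpace ℝ g] [LieRing g] [LieAlgebra ℝ g]
    [FiniteDimensional ℝ g]
    (φ : E → (g →L[ℝ] g)) (ω : E → (E →L[ℝ] g))
    (hφ : ContDiff ℝ (⊤ : ℕ∞) φ) (hω : ContDiff ℝ (⊤ : ℕ∞) ω)
    (hA : ∀ s t : (E → E) × (E → g), SmoothPairSection s → SmoothPairSection t →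
      algebroidMap φ ω (algebroidBracket s t)
        = algebroidBracket (algebroidMap φ ω s) (algebroidMap φ ω t)) :
    ∀ (x : E) (a b : g), φ x ⁅a, b⁆ = ⁅φ x a, φ x b⁆ := by
  intro x a b
  have hs : SmoothPairSection ((fun _ => (0:E)), (fun _ => a)) :=
    ⟨contDiff_const, contDiff_const⟩
  have ht : SmoothPairSection ((fun _ => (0:E)), (fun _ => b)) :=
    ⟨contDiff_const, contDiff_const⟩
  have h := congrArg (fun p => p.2 x)
    (hA ((fun _ => (0:E)), (fun _ => a)) ((fun _ => (0:E)), (fun _ => b)) hs ht)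
  simp only [algebroidMap, algebroidBracket, VectorField.lieBracket, fderiv_fun_const, Pi.zero_apply,
    ContinuousLinearMap.zero_apply, map_zero, ContinuousLinearMap.map_zero, add_zero, sub_zero] at h
  simpa using h
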